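/- For every worm A (with finite modalities) and natural number x: τ(A⟦x⟧) = τ(A)⟦x+1⟧, i.e., the tree-ordinal translation of worms commutes with the respective step-down/fundamental sequence operations. -/
import Mathlib


/-- Tree ordinals as formal terms: `0`, and `ω^{t₁} + ⋯ + ω^{tₙ}` for tree
ordinals `t₁, …, tₙ` (no ordering condition on the exponents).
`oadd e r` denotes `r + ω^e`, i.e. `e` is the exponent of the **rightmost**
summand and `r` collects the summands to its left. -/
inductive T : Type where
  | zero : T
  | oadd : T → T → T
deriving DecidableEq

namespace T

/-- The induced ordinal `o(t)` of a tree term (ordinal arithmetic, so smaller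
summands may be absorbed). -/
noncomputable def o : T → Ordinal.{0}
  | zero => 0
  | oadd e r => o r + Ordinal.omega0 ^ o e

/-- The norm: `N0 = 0`, `N(ω^α + β) = 1 + Nα + Nβ`. -/
def norm : T → ℕ
  | zero => 0
  | oadd e r => 1 + norm e + norm r

/-- `rep e r x = r + ω^e · x`. -/
def rep (e r : T) : ℕ → T
  | 0 => r
  | x + 1 => oadd e (rep e r x)

/-- The standard fundamental sequences on tree terms:
`0[x] = 0`, `1[x] = 0`, `(t+1)[x] = t`, `(t + ω^{s+1})[x] = t + ω^s · x`,
`(t + ω^λ)[x] = t + ω^{λ[x]}` for a limit term `λ`. -/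
def fund : T → ℕ → T
  | zero, _ => zero
  | oadd zero r, _ => r
  | oadd (oadd zero e') r, x => rep e' r x
  | oadd (oadd (oadd a b) e') r, x => oadd (fund (oadd (oadd a b) e') x) r

/-- Auxiliary sum for the ordinal correction function: `crSum t m` adds
`N(ω^{tᵢ})` for each summand `ω^{tᵢ}` of `t` whose exponent is smaller (as an
ordinal) than some exponent strictly to its right (where `m` is the maximum of
the exponents lying to the right of all of `t`). -/
noncomputable def crSum : T → Ordinal.{0} → ℕ
  | zero, _ => 0
  | oadd e r, m => (if o e < m then 1 + norm e else 0) + crSum r (max m (o e))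

mutual
/-- The ordinal correction function `Cr`:
`Cr(0) = 0` and `Cr(t) = Σ {N(ω^{tᵢ}) : tᵢ < tⱼ for some j > i} + max Cr(tᵢ)`. -/
noncomputable def cr : T → ℕ
  | zero => 0
  | oadd e r => crSum (oadd e r) 0 + max (cr e) (crMax r)

/-- Maximum of `Cr` over the exponents of a term. -/
noncomputable def crMax : T → ℕ
  | zero => 0
  | oadd e r => max (cr e) (crMax r)
end

/-- Cantor normal form predicate: exponents are (weakly) increasing from the
rightmost summand leftwards, and all exponents are themselves in CNF.  Terms
satisfying `NF` faithfully represent the ordinals below `ε₀`. -/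
def NF : T → Prop
  | zero => True
  | oadd e r => NF e ∧ NF r ∧ (match r with | zero => True | oadd f _ => o e ≤ o f)

/-- A term is a limit iff its rightmost summand has nonzero exponent. -/
def IsLim : T → Prop
  | oadd (oadd _ _) _ => True
  | _ => False

/-- Drop rightmost summands with exponent of ordinal value `< b`
(the absorption performed by ordinal addition). -/
noncomputable def cleanup (b : Ordinal.{0}) : T → T
  | zero => zero
  | oadd f s => if o f < b then cleanup b s else oadd f s

/-- Normalization of a tree term to the Cantor normal form of its induced
ordinal: `toNF t` is `NF`, and `o (toNF t) = o t`. -/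
noncomputable def toNF : T → T
  | zero => zero
  | oadd e r => oadd (toNF e) (cleanup (o e) (toNF r))

/-- `repOne r x = r + x`. -/
def repOne (r : T) : ℕ → T
  | 0 => r
  | x + 1 => oadd zero (repOne r x)

/-- `repPair s r x = r + (ω^s + 1) · x`. -/
def repPair (s r : T) : ℕ → T
  | 0 => r
  | x + 1 => oadd zero (oadd s (repPair s r x))

/-- The worm-induced fundamental sequences `⟦·⟧` on tree terms:
`0⟦x⟧ = 0`, `(t+1)⟦x⟧ = t`, `(t+ω)⟦x⟧ = t + x`,
`(t + ω^{s+1})⟦x⟧ = t + (ω^s + 1) · x` for `s ≠ 0`, and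
`(t + ω^λ)⟦x⟧ = t + ω^{λ⟦x⟧}` for a limit term `λ`. -/
def fundW : T → ℕ → T
  | zero, _ => zero
  | oadd zero r, _ => r
  | oadd (oadd zero zero) r, x => repOne r x
  | oadd (oadd zero (oadd a b)) r, x => repPair (oadd a b) r x
  | oadd (oadd (oadd a b) e') r, x => oadd (fundW (oadd (oadd a b) e') x) r

end T

/-- Graph of the Hardy functions (with the standard fundamental sequences):
`H_0(x) = x`, `H_{t+1}(x) = H_t(x+1)`, `H_t(x) = H_{t[x]}(x)` for limit `t`.
`HG t x y` means `H_t(x)` is defined with value `y`. -/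
inductive HG : T → ℕ → ℕ → Prop where
  | zero (x) : HG T.zero x x
  | succ {r x y} : HG r (x + 1) y → HG (T.oadd T.zero r) x y
  | lim {e r x y} (he : e ≠ T.zero) :
      HG (T.fund (T.oadd e r) x) x y → HG (T.oadd e r) x y

/-- The `n`-head of a worm over `ℕ`. -/
def headN (n : ℕ) : List ℕ → List ℕ
  | [] => []
  | m :: A => if m < n then [] else m :: headN n A

/-- The `n`-remainder of a worm over `ℕ`. -/
def remN (n : ℕ) : List ℕ → List ℕ
  | [] => []
  | m :: A => if m < n then m :: A else remN n A

/-- The step-down function on worms with finite modalities: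
`⊤⟦x⟧ = ⊤`, `(0B)⟦x⟧ = B`, `(⟨n+1⟩B)⟦x⟧ = (⟨n⟩h_{n+1}(B))^{x+1} r_{n+1}(B)`. -/
def stepW : List ℕ → ℕ → List ℕ
  | [], _ => []
  | 0 :: B, _ => B
  | (n + 1) :: B, x =>
      (List.replicate (x + 1) (n :: headN (n + 1) B)).flatten ++ remN (n + 1) B

/-- The tree-ordinal translation of a worm:  `τ(⊤) = 0` and
`τ(0^{k₀} A₁⁺ 0^{k₁} ⋯ Aₙ⁺ 0^{kₙ}) = kₙ + ω^{τ(Aₙ)} + k_{n-1} + ⋯ + ω^{τ(A₁)} + k₀`,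
where the `Aᵢ` are nonempty and `A⁺` shifts all modalities up by one.
Recursively: `τ(0A) = τ(A) + 1`, and for a worm starting with a positive entry,
its maximal positive prefix `B⁺` contributes the summand `ω^{τ(B)}`. -/
def tau : List ℕ → T
  | [] => T.zero
  | 0 :: A => T.oadd T.zero (tau A)
  | (m + 1) :: A =>
      T.oadd (tau (((m + 1) :: A.takeWhile (· ≠ 0)).map (· - 1)))
             (tau (A.dropWhile (· ≠ 0)))
termination_by l => l.sum + l.length
decreasing_by
  all_goals
    simp only [List.map_cons, List.sum_cons, List.length_cons]
    have h1 : ((List.takeWhile (· ≠ 0) A).map (· - 1)).sum ≤ A.sum := by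
      calc ((List.takeWhile (· ≠ 0) A).map (· - 1)).sum
          ≤ ((List.takeWhile (· ≠ 0) A).map (fun n => n)).sum :=
            List.sum_le_sum (fun i _ => Nat.sub_le i 1)
        _ = (List.takeWhile (· ≠ 0) A).sum := by simp
        _ ≤ A.sum := (List.takeWhile_sublist _).sum_le_sum (by intro a _; exact Nat.zero_le a)
    have h2 : ((List.takeWhile (· ≠ 0) A).map (· - 1)).length ≤ A.length := by
      simpa using (List.takeWhile_sublist (l := A) (p := (· ≠ 0))).length_le
    have h3 : (List.dropWhile (· ≠ 0) A).sum ≤ A.sum :=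
      (List.dropWhile_sublist _).sum_le_sum (by intro a _; exact Nat.zero_le a)
    have h4 : (List.dropWhile (· ≠ 0) A).length ≤ A.length :=
      (List.dropWhile_sublist (l := A) (p := (· ≠ 0))).length_le
    omega


namespace TauStep

lemma takeWhile_ne_append (L C : List ℕ) (h : ∀ a ∈ L, a ≠ 0) :
    (L ++ C).takeWhile (· ≠ 0) = L ++ C.takeWhile (· ≠ 0) := by
  induction L with
  | nil => simp
  | cons a L ih =>
      have ha : a ≠ 0 := h a (by simp)
      have ih' := ih (fun b hb => h b (by simp [hb]))
      simp only [ne_eq, decide_not] at ih' ⊢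
      simp [List.cons_append, List.takeWhile_cons, ha, ih']

lemma dropWhile_ne_append (L C : List ℕ) (h : ∀ a ∈ L, a ≠ 0) :
    (L ++ C).dropWhile (· ≠ 0) = C.dropWhile (· ≠ 0) := by
  induction L with
  | nil => simp
  | cons a L ih =>
      have ha : a ≠ 0 := h a (by simp)
      have ih' := ih (fun b hb => h b (by simp [hb]))
      simp only [ne_eq, decide_not] at ih' ⊢
      simp [List.cons_append, List.dropWhile_cons, ha, ih']

lemma takeWhile_dropWhile_ne (B : List ℕ) :
    (B.dropWhile (· ≠ 0)).takeWhile (· ≠ 0) = [] := by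
  induction B with
  | nil => simp
  | cons a B ih =>
    simp only [ne_eq, decide_not] at ih ⊢
    by_cases ha : a = 0 <;>
      simp [List.dropWhile_cons, List.takeWhile_cons, ha, ih]

lemma dropWhile_ne_idem (B : List ℕ) :
    (B.dropWhile (· ≠ 0)).dropWhile (· ≠ 0) = B.dropWhile (· ≠ 0) := by
  induction B with
  | nil => simp
  | cons a B ih =>
    simp only [ne_eq, decide_not] at ih ⊢
    by_cases ha : a = 0 <;> simp [List.dropWhile_cons, ha, ih]

lemma mem_takeWhile_ne {a : ℕ} {B : List ℕ} (h : a ∈ B.takeWhile (· ≠ 0)) : a ≠ 0 := by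
  have := List.mem_takeWhile_imp h
  simpa using this

lemma headN_one (B : List ℕ) : headN 1 B = B.takeWhile (· ≠ 0) := by
  induction B with
  | nil => rfl
  | cons a B ih =>
    simp only [ne_eq, decide_not] at ih ⊢
    rcases a with _ | a
    · simp [headN, List.takeWhile_cons]
    · simp [headN, List.takeWhile_cons, ih]

lemma remN_one (B : List ℕ) : remN 1 B = B.dropWhile (· ≠ 0) := by
  induction B with
  | nil => rfl
  | cons a B ih =>
    simp only [ne_eq, decide_not] at ih ⊢
    rcases a with _ | a
    · simp [remN, List.dropWhile_cons]
    · simp [remN, List.dropWhile_cons, ih]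

lemma headN_map (k : ℕ) (B : List ℕ) :
    (headN (k+1) B).map (· - 1) = headN k ((B.takeWhile (· ≠ 0)).map (· - 1)) := by
  induction B with
  | nil => rfl
  | cons a B ih =>
    simp only [ne_eq, decide_not] at ih ⊢
    by_cases ha : a < k + 1
    · rcases a with _ | c
      · simp [headN, List.takeWhile_cons]
      · have hc : c < k := by omega
        simp [headN, List.takeWhile_cons, ha, hc]
    · rcases a with _ | c
      · omega
      · have hc : ¬ c < k := by omega
        simp [headN, List.takeWhile_cons, ha, hc, ih]

lemma remN_take (k : ℕ) (B : List ℕ) :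
    ((remN (k+1) B).takeWhile (· ≠ 0)).map (· - 1)
      = remN k ((B.takeWhile (· ≠ 0)).map (· - 1)) := by
  induction B with
  | nil => rfl
  | cons a B ih =>
    simp only [ne_eq, decide_not] at ih ⊢
    by_cases ha : a < k + 1
    · rcases a with _ | c
      · simp [remN, List.takeWhile_cons]
      · have hc : c < k := by omega
        simp [remN, List.takeWhile_cons, ha, hc]
    · rcases a with _ | c
      · omega
      · have hc : ¬ c < k := by omega
        simp [remN, List.takeWhile_cons, ha, hc, ih]

lemma remN_drop (k : ℕ) (B : List ℕ) :
    (remN (k+1) B).dropWhile (· ≠ 0) = B.dropWhile (· ≠ 0) := by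
  induction B with
  | nil => rfl
  | cons a B ih =>
    simp only [ne_eq, decide_not] at ih ⊢
    by_cases ha : a < k + 1
    · simp [remN, ha]
    · have ha0 : a ≠ 0 := by omega
      simp [remN, List.dropWhile_cons, ha, ha0, ih]

lemma mem_headN_ne {k a : ℕ} {B : List ℕ} (h : a ∈ headN (k+1) B) : a ≠ 0 := by
  induction B with
  | nil => simp [headN] at h
  | cons b B ih =>
    by_cases hb : b < k + 1
    · simp [headN, hb] at h
    · simp only [headN, hb, if_neg, ite_false, List.mem_cons] at h
      rcases h with h | h
      · omega
      · exact ih h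

lemma sum_map_sub_one (l : List ℕ) (h : ∀ a ∈ l, a ≠ 0) :
    (l.map (· - 1)).sum + l.length = l.sum := by
  induction l with
  | nil => simp
  | cons a l ih =>
      have ha : a ≠ 0 := h a (by simp)
      have := ih (fun b hb => h b (by simp [hb]))
      simp only [List.map_cons, List.sum_cons, List.length_cons]
      omega

lemma tau_cons_zero (B : List ℕ) : tau (0 :: B) = T.oadd T.zero (tau B) := by simp [tau]

lemma tau_cons_succ (m : ℕ) (B : List ℕ) : tau ((m+1) :: B) =
    T.oadd (tau (((m + 1) :: B.takeWhile (· ≠ 0)).map (· - 1)))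
           (tau (B.dropWhile (· ≠ 0))) := by rw [tau]

lemma tau_cons_oadd (m : ℕ) (l : List ℕ) : ∃ p q, tau (m :: l) = T.oadd p q := by
  rcases m with _ | m
  · exact ⟨_, _, tau_cons_zero l⟩
  · exact ⟨_, _, tau_cons_succ m l⟩

lemma tau_replicate_zero (k : ℕ) (C : List ℕ) :
    tau (List.replicate k 0 ++ C) = T.repOne (tau C) k := by
  induction k with
  | zero => rfl
  | succ k ih => simp [List.replicate_succ, tau_cons_zero, ih, T.repOne]

end TauStep

namespace TauStep

lemma dropWhile_of_takeWhile_nil {B : List ℕ} (h : B.takeWhile (· ≠ 0) = []) :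
    B.dropWhile (· ≠ 0) = B := by
  cases B with
  | nil => rfl
  | cons a B =>
    by_cases ha : a = 0
    · simp [List.dropWhile_cons, ha]
    · simp [List.takeWhile_cons, ha] at h

lemma mem_flatten_replicate_ne {x a m : ℕ} {l : List ℕ}
    (hl : ∀ b ∈ l, b ≠ 0)
    (h : a ∈ (List.replicate x ((m + 1) :: l)).flatten) : a ≠ 0 := by
  rw [List.mem_flatten] at h
  obtain ⟨L, hL, haL⟩ := h
  rw [List.mem_replicate] at hL
  rw [hL.2] at haL
  rcases List.mem_cons.mp haL with h | h
  · omega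
  · exact hl a h

lemma tau_rep_flat (c : ℕ) (h d : List ℕ) (hh : ∀ a ∈ h, a ≠ 0)
    (hd : d.takeWhile (· ≠ 0) = []) (hdd : d.dropWhile (· ≠ 0) = d) :
    ∀ k, tau ((List.replicate k (0 :: (c+1) :: h)).flatten ++ d)
      = T.repPair (tau (((c+1) :: h).map (· - 1))) (tau d) k := by
  intro k
  induction k with
  | zero => simp [T.repPair]
  | succ k ih =>
    have hrest_tw : ((List.replicate k (0 :: (c+1) :: h)).flatten ++ d).takeWhile (· ≠ 0)
        = [] := by
      cases k with
      | zero => simpa using hd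
      | succ k => simp [List.replicate_succ, List.takeWhile_cons]
    have hrest_dw : ((List.replicate k (0 :: (c+1) :: h)).flatten ++ d).dropWhile (· ≠ 0)
        = (List.replicate k (0 :: (c+1) :: h)).flatten ++ d := by
      cases k with
      | zero => simpa using hdd
      | succ k => simp [List.replicate_succ, List.dropWhile_cons]
    have e1 : (List.replicate (k+1) (0 :: (c+1) :: h)).flatten ++ d
        = 0 :: ((c+1) :: (h ++ ((List.replicate k (0 :: (c+1) :: h)).flatten ++ d))) := by
      simp [List.replicate_succ]
    rw [e1, tau_cons_zero, tau_cons_succ, takeWhile_ne_append _ _ hh,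
        dropWhile_ne_append _ _ hh, hrest_tw, hrest_dw, List.append_nil, ih]
    rfl

end TauStep

/-- For every worm `A` with finite modalities and every
natural number `x`: `τ(A⟦x⟧) = τ(A)⟦x+1⟧`, i.e. the tree-ordinal translation
of worms commutes with the respective step-down/fundamental sequence
operations. -/
theorem tau_stepW (A : List ℕ) (x : ℕ) :
    tau (stepW A x) = T.fundW (tau A) (x + 1) := by
  match A with
  | [] => simp [stepW, tau, T.fundW]
  | 0 :: B => rw [TauStep.tau_cons_zero]; simp [stepW, T.fundW]
  | 1 :: B =>
    have hstep : stepW (1 :: B) x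
        = (List.replicate (x+1) (0 :: B.takeWhile (· ≠ 0))).flatten
            ++ B.dropWhile (· ≠ 0) := by
      show (List.replicate (x + 1) (0 :: headN 1 B)).flatten ++ remN 1 B = _
      rw [TauStep.headN_one, TauStep.remN_one]
    rw [hstep]
    rcases hB : B.takeWhile (· ≠ 0) with _ | ⟨b, h⟩
    · have hdw : B.dropWhile (· ≠ 0) = B := TauStep.dropWhile_of_takeWhile_nil hB
      rw [hB, hdw]
      have hfl : (List.replicate (x+1) ([0] : List ℕ)).flatten = List.replicate (x+1) 0 := by
        simp
      rw [hfl, TauStep.tau_replicate_zero, TauStep.tau_cons_succ 0 B, hB, hdw]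
      simp [tau, T.fundW]
    · rcases b with _ | c
      · exact absurd rfl (TauStep.mem_takeWhile_ne (a := 0) (B := B) (by rw [hB]; simp))
      have hh : ∀ a ∈ h, a ≠ 0 := fun a ha =>
        TauStep.mem_takeWhile_ne (a := a) (B := B) (by rw [hB]; simp [ha])
      rw [hB,
        TauStep.tau_rep_flat c h _ hh (TauStep.takeWhile_dropWhile_ne B)
          (TauStep.dropWhile_ne_idem B) (x+1),
        TauStep.tau_cons_succ 0 B, hB]
      simp only [List.map_cons, Nat.add_sub_cancel]
      rw [TauStep.tau_cons_zero]
      obtain ⟨p, q, hpq⟩ := TauStep.tau_cons_oadd c (h.map (· - 1))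
      rw [hpq]
      simp [T.fundW]
  | (n+2) :: B =>
    have IH := tau_stepW ((n+1) :: (B.takeWhile (· ≠ 0)).map (· - 1)) x
    have hNne : ∀ a ∈ headN (n+2) B, a ≠ 0 := fun a ha => TauStep.mem_headN_ne ha
    have hFne : ∀ a ∈ (List.replicate x ((n+1) :: headN (n+2) B)).flatten, a ≠ 0 :=
      fun a ha => TauStep.mem_flatten_replicate_ne hNne ha
    have hstep : stepW ((n+2) :: B) x
        = (n+1) :: (headN (n+2) B ++ ((List.replicate x ((n+1) :: headN (n+2) B)).flatten
            ++ remN (n+2) B)) := by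
      show (List.replicate (x + 1) ((n+1) :: headN (n+2) B)).flatten ++ remN (n+2) B = _
      simp [List.replicate_succ]
    have key : (((n+1) :: (headN (n+2) B
          ++ ((List.replicate x ((n+1) :: headN (n+2) B)).flatten
          ++ (remN (n+2) B).takeWhile (· ≠ 0)))).map (· - 1))
        = stepW ((n+1) :: (B.takeWhile (· ≠ 0)).map (· - 1)) x := by
      show _ = (List.replicate (x + 1)
            (n :: headN (n+1) ((B.takeWhile (· ≠ 0)).map (· - 1)))).flatten
          ++ remN (n+1) ((B.takeWhile (· ≠ 0)).map (· - 1))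
      rw [← TauStep.headN_map, ← TauStep.remN_take]
      simp [List.replicate_succ, List.map_flatten, List.map_replicate, Nat.add_sub_cancel]
    rw [hstep, TauStep.tau_cons_succ n _,
        TauStep.takeWhile_ne_append _ _ hNne, TauStep.takeWhile_ne_append _ _ hFne,
        TauStep.dropWhile_ne_append _ _ hNne, TauStep.dropWhile_ne_append _ _ hFne,
        TauStep.remN_drop]
    rw [key, IH]
    rw [TauStep.tau_cons_succ (n+1) B]
    have e2 : ((n + 1 + 1) :: B.takeWhile (· ≠ 0)).map (· - 1)
        = (n+1) :: (B.takeWhile (· ≠ 0)).map (· - 1) := by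
      simp
    rw [e2, TauStep.tau_cons_succ n ((B.takeWhile (· ≠ 0)).map (· - 1))]
    obtain ⟨p, q, hpq⟩ := TauStep.tau_cons_oadd n
      (((((B.takeWhile (· ≠ 0)).map (· - 1)).takeWhile (· ≠ 0))).map (· - 1))
    simp only [List.map_cons, Nat.add_sub_cancel]
    rw [hpq]
    simp [T.fundW]
termination_by A.sum + A.length
decreasing_by
  simp only [List.sum_cons, List.length_cons, List.length_map]
  have h2 := TauStep.sum_map_sub_one (B.takeWhile (· ≠ 0))
    (fun a ha => TauStep.mem_takeWhile_ne ha)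
  have h3 : (B.takeWhile (· ≠ 0)).sum ≤ B.sum :=
    (List.takeWhile_sublist _).sum_le_sum (by intro a _; exact Nat.zero_le a)
  omega
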